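/- arXiv:1111.0519 — 5 statements merged into one kernel-verified Lean document; each statement's English description precedes it below -/
import Mathlib

section
/- For a connected closed (D+1)-colored graph G with 2k vertices, the total number F of faces satisfies F = (D(D−1)/2)·k + D − (2/(D−1)!)·ω(G), where ω(G) = Σ_J g(J) is the sum of the genera of all D!/2 jackets of G; consequently (2/(D−1)!)·ω(G) is a nonnegative integer. -/
/-- Face counting for a connected closed `(D+1)`-colored graph `G` with `2k` vertices.
The `D!/2` jackets are indexed by `Fin (D!/2)`; jacket `J` has genus `g J` and
`Fc J = (D−1)k + 2 − 2·g J` faces, and since every face of `G` belongs to exactly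
`(D−1)!` jackets, the total number `F` of faces satisfies `(D−1)!·F = ∑_J Fc J`.
Then `F = (D(D−1)/2)·k + D − (2/(D−1)!)·ω(G)` where `ω(G) = ∑_J g J`; in particular
`(2/(D−1)!)·ω(G)` is a nonnegative integer `m`, i.e. `2·ω(G) = (D−1)!·m` and
`F + m = (D(D−1)/2)·k + D`. -/
theorem face_count_from_jacket_genera (D k F : ℕ) (hD : 2 ≤ D)
    (g Fc : Fin (Nat.factorial D / 2) → ℕ)
    (hface : ∀ J, (Fc J : ℤ) = (D - 1) * k + 2 - 2 * g J)
    (hcount : (Nat.factorial (D - 1)) * F = ∑ J, Fc J) :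
    ∃ m : ℕ, 2 * ∑ J, g J = Nat.factorial (D - 1) * m ∧
      F + m = D * (D - 1) / 2 * k + D := by
  have h2 : 2 ∣ Nat.factorial D := Nat.dvd_factorial (by norm_num) hD
  have hN2 : 2 * (Nat.factorial D / 2) = Nat.factorial D := Nat.mul_div_cancel' h2
  have hA2 : 2 ∣ D * (D - 1) := by
    rcases Nat.even_or_odd D with h | h
    · exact Dvd.dvd.mul_right h.two_dvd _
    · exact Dvd.dvd.mul_left (Nat.Odd.sub_odd h odd_one).two_dvd _
  have hA : D * (D - 1) / 2 * 2 = D * (D - 1) := Nat.div_mul_cancel hA2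
  have hfac : Nat.factorial D = D * Nat.factorial (D - 1) := by
    conv_lhs => rw [show D = (D - 1) + 1 by omega]
    rw [Nat.factorial_succ]; congr 1; omega
  -- key integer equation
  have key : ((D - 1).factorial : ℤ) * F
      = (Nat.factorial D / 2 : ℕ) * (((D : ℤ) - 1) * k + 2) - 2 * ∑ J, (g J : ℤ) := by
    have hc : (((D - 1).factorial : ℤ)) * F = ∑ J, (Fc J : ℤ) := by
      exact_mod_cast congrArg (Nat.cast : ℕ → ℤ) hcount
    rw [hc, Finset.sum_congr rfl fun J _ => hface J]
    rw [Finset.sum_sub_distrib, Finset.sum_const, ← Finset.mul_sum]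
    simp only [Finset.card_univ, Fintype.card_fin, nsmul_eq_mul]
  have hgpos : (0 : ℤ) ≤ ∑ J, (g J : ℤ) := Finset.sum_nonneg fun J _ => by positivity
  have hDm1 : ((D : ℤ) - 1) = ((D - 1 : ℕ) : ℤ) := by push_cast; omega
  -- 2 * ∑ g = (D-1)! * (A*k + D - F)
  have main : 2 * ∑ J, (g J : ℤ)
      = ((D - 1).factorial : ℤ) * ((D * (D - 1) / 2 : ℕ) * k + D - F) := by
    have e1 : (2 : ℤ) * ((Nat.factorial D / 2 : ℕ) * (((D : ℤ) - 1) * k + 2))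
        = ((D - 1).factorial : ℤ) * (2 * ((D * (D - 1) / 2 : ℕ) * k + D)) := by
      have c1 : (2 : ℤ) * (Nat.factorial D / 2 : ℕ) = (Nat.factorial D : ℤ) := by
        exact_mod_cast congrArg (Nat.cast : ℕ → ℤ) hN2
      have c2 : ((D * (D - 1) / 2 : ℕ) : ℤ) * 2 = (D : ℤ) * ((D : ℤ) - 1) := by
        rw [hDm1]; exact_mod_cast congrArg (Nat.cast : ℕ → ℤ) hA
      have c3 : (Nat.factorial D : ℤ) = D * (D - 1).factorial := by
        exact_mod_cast congrArg (Nat.cast : ℕ → ℤ) hfac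
      linear_combination (((D:ℤ)-1)*(k:ℤ)+2)*c1 + (((D:ℤ)-1)*(k:ℤ)+2)*c3 - ((D-1).factorial:ℤ)*(k:ℤ)*c2
    have e1' : ((Nat.factorial D / 2 : ℕ) : ℤ) * (((D : ℤ) - 1) * k + 2)
        = ((D - 1).factorial : ℤ) * ((D * (D - 1) / 2 : ℕ) * k + D) :=
      mul_left_cancel₀ two_ne_zero (e1.trans (by ring))
    linear_combination key + e1'
  have hfpos : (0 : ℤ) < ((D - 1).factorial : ℤ) := by exact_mod_cast (D - 1).factorial_pos
  have hnn : (0 : ℤ) ≤ (D * (D - 1) / 2 : ℕ) * k + D - F := by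
    have h0 : (0 : ℤ) ≤ ((D - 1).factorial : ℤ) * ((D * (D - 1) / 2 : ℕ) * k + D - F) := by
      rw [← main]; linarith
    exact nonneg_of_mul_nonneg_left (by linarith [h0] : (0:ℤ) ≤ ((D * (D - 1) / 2 : ℕ) * k + D - F) * ((D - 1).factorial : ℤ)) hfpos
  refine ⟨((D * (D - 1) / 2 : ℕ) * (k : ℤ) + D - F).toNat, ?_, ?_⟩
  · have : (2 * ∑ J, g J : ℤ) = ((D - 1).factorial : ℤ) *
        (((D * (D - 1) / 2 : ℕ) * (k : ℤ) + D - F).toNat : ℤ) := by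
      rw [Int.toNat_of_nonneg hnn]; push_cast at main ⊢; linarith [main]
    exact_mod_cast this
  · have : ((F : ℤ) + (((D * (D - 1) / 2 : ℕ) * (k : ℤ) + D - F).toNat : ℤ))
        = (D * (D - 1) / 2 : ℕ) * k + D := by
      rw [Int.toNat_of_nonneg hnn]; ring
    exact_mod_cast this
end

section
/- Suppose D ≥ 3. If G is a closed connected (D+1)-colored graph of degree zero with 2k vertices, then G has at least one face containing exactly two vertices. More precisely, the number F₁ of faces with exactly two vertices satisfies F₁ = 2D + Σ_{s≥3}(s−2)F_s + (D(D−3)/2)·k > 0, where F_s is the number of faces with 2s vertices. -/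
/-!
Subtracting twice the face count from the vertex–face incidence count gives
`∑ (s - 2) F s = (D(D+1)/2 - D(D-1)) k - 2D = -(D(D-3)/2) k - 2D`.
Faces with `s ≥ 2` contribute nonnegatively on the left, so the whole negative
right-hand side must be paid for by the digons, each contributing `-1`.
-/

theorem Finsupp.sum_mul_sub_two_mul_sum_eq (F : ℕ →₀ ℕ) :
    ((∑ s ∈ F.support, s * F s : ℕ) : ℤ) - 2 * ∑ s ∈ F.support, F s =
      ∑ s ∈ F.support.filter (fun s => 3 ≤ s), ((s : ℤ) - 2) * F s - F 1 - 2 * F 0 := by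
  have hsmall : ∑ s ∈ F.support.filter (fun s => ¬ 3 ≤ s), ((s : ℤ) - 2) * F s =
      ∑ s ∈ Finset.range 3, ((s : ℤ) - 2) * F s := by
    refine Finset.sum_subset (fun s hs => by simp at hs ⊢; omega) fun s hs hs' => ?_
    simp only [Finset.mem_filter, Finsupp.mem_support_iff, not_and, not_le, Finset.mem_range] at hs hs'
    simp [not_imp_comm.1 hs' (not_not.2 hs)]
  have hlin : ((∑ s ∈ F.support, s * F s : ℕ) : ℤ) - 2 * ∑ s ∈ F.support, F s =
      ∑ s ∈ F.support, ((s : ℤ) - 2) * F s := by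
    push_cast
    rw [Finset.mul_sum, ← Finset.sum_sub_distrib]
    exact Finset.sum_congr rfl fun s _ => by ring
  rw [hlin, ← Finset.sum_filter_add_sum_filter_not F.support (fun s => 3 ≤ s), hsmall]
  simp only [Finset.sum_range_succ, Finset.range_zero, Finset.sum_empty]
  push_cast
  ring

theorem two_mul_half_mul_sub_one_eq {D : ℕ} (hD : 3 ≤ D) :
    2 * (D * (D - 1) / 2) = D * (D + 1) / 2 + D * (D - 3) / 2 := by
  obtain ⟨m, rfl⟩ : ∃ m, D = m + 3 := ⟨D - 3, by omega⟩
  have hpred := Nat.two_mul_div_two_of_even (Nat.even_mul_pred_self (m + 3))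
  have hsucc := Nat.two_mul_div_two_of_even (Nat.even_mul_succ_self (m + 3))
  have hsub := Nat.two_mul_div_two_of_even (n := (m + 3) * (m + 3 - 3)) (by
    rw [Nat.even_mul]; rcases Nat.even_or_odd m with h | h <;> simp [h, parity_simps])
  simp only [Nat.add_sub_cancel, show m + 3 - 1 = m + 2 by omega] at hpred hsub ⊢
  nlinarith

theorem degree_zero_has_short_face_general (D k : ℕ) (hD : 3 ≤ D)
    (F : ℕ →₀ ℕ) (h0 : F 0 = 0)
    (h1 : ∑ s ∈ F.support, F s = D * (D - 1) / 2 * k + D)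
    (h2 : ∑ s ∈ F.support, s * F s = D * (D + 1) / 2 * k) :
    (F 1 : ℤ) = 2 * D + (∑ s ∈ F.support.filter (fun s => 3 ≤ s),
        ((s : ℤ) - 2) * F s) + (D * (D - 3) / 2 : ℕ) * k ∧
    0 < F 1 := by
  have hcount := F.sum_mul_sub_two_mul_sum_eq
  rw [h1, h2, h0] at hcount
  have htri : (2 * (D * (D - 1) / 2 : ℕ) : ℤ) = (D * (D + 1) / 2 : ℕ) + (D * (D - 3) / 2 : ℕ) :=
    mod_cast two_mul_half_mul_sub_one_eq hD
  have hF1 : (F 1 : ℤ) = 2 * D + (∑ s ∈ F.support.filter (fun s => 3 ≤ s),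
      ((s : ℤ) - 2) * F s) + (D * (D - 3) / 2 : ℕ) * k := by
    simp only [Nat.cast_mul, Nat.cast_add, CharP.cast_eq_zero] at hcount htri
    linear_combination hcount + (k : ℤ) * htri
  have hlong : 0 ≤ ∑ s ∈ F.support.filter (fun s => 3 ≤ s), ((s : ℤ) - 2) * F s :=
    Finset.sum_nonneg fun s hs => mul_nonneg (by have := (Finset.mem_filter.1 hs).2; omega) (by positivity)
  refine ⟨hF1, ?_⟩
  have : (0 : ℤ) < F 1 := by rw [hF1]; positivity
  exact_mod_cast this

/-- Suppose `D ≥ 3` and `G` is a closed connected `(D+1)`-colored graph of degree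
zero with `2k` vertices.  Encoding the face data by `F s` = number of faces with
`2s` vertices: degree zero gives `Σ_s F s = (D(D−1)/2)k + D` faces in total, and
counting vertices face by face (each vertex lies in `D(D+1)/2` faces) gives
`Σ_s s·F s = (D(D+1)/2)k`.  Then
`F 1 = 2D + Σ_{s≥3}(s−2)·F s + (D(D−3)/2)·k`, and in particular `G` has at least
one face with exactly two vertices, `0 < F 1`. -/
theorem degree_zero_has_short_face (D k : ℕ) (hD : 3 ≤ D) (hk : 1 ≤ k)
    (F : ℕ →₀ ℕ) (h0 : F 0 = 0)
    (h1 : ∑ s ∈ F.support, F s = D * (D - 1) / 2 * k + D)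
    (h2 : ∑ s ∈ F.support, s * F s = D * (D + 1) / 2 * k) :
    (F 1 : ℤ) = 2 * D + (∑ s ∈ F.support.filter (fun s => 3 ≤ s),
        ((s : ℤ) - 2) * F s) + (D * (D - 3) / 2 : ℕ) * k ∧
    0 < F 1 :=
  degree_zero_has_short_face_general D k hD F h0 h1 h2
end

section
/- Let B be a melonic D-colored graph encoded by its D-ary tree T_B with k vertices. Then there exists a unique melonic (D+1)-colored graph G with the same number of vertices that reduces to B upon deletion of all edges of color 0; its tree is obtained from T_B by attaching one leaf of color 0 to every vertex. -/
/-- Rooted `m`-ary colored trees, encoding melonic `m`-colored graphs: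
each internal vertex has one child per color in `Fin m`. -/
inductive AryTree (m : ℕ) : Type
  | leaf : AryTree m
  | node : (Fin m → AryTree m) → AryTree m

/-- The number of internal vertices of a tree (one internal vertex per melon,
i.e. per pair of graph vertices). -/
def AryTree.internalCount {m : ℕ} : AryTree m → ℕ
  | .leaf => 0
  | .node f => 1 + ∑ i : Fin m, (f i).internalCount

/-- Deleting all tree edges and leaves of color `0` from the tree of a melonic
`(D+1)`-colored graph: the component of the root is obtained by discarding the
color-`0` child of every vertex. -/
def AryTree.skel {D : ℕ} : AryTree (D + 1) → AryTree D
  | .leaf => .leaf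
  | .node f => .node (fun i => (f i.succ).skel)

/-- Attaching a leaf of color `0` to every vertex of a `D`-ary tree. -/
def AryTree.attachZeroLeaf {D : ℕ} : AryTree D → AryTree (D + 1)
  | .leaf => .leaf
  | .node f => .node (Fin.cases .leaf (fun i => (f i).attachZeroLeaf))

/-! A covering tree `g` has at least as many vertices as its skeleton `g.skel`, with equality
exactly when every color-`0` child of `g` is a leaf; so the only covering with as many vertices
as `t` is `t.attachZeroLeaf`. -/

namespace AryTree

variable {D : ℕ}

lemma internalCount_eq_zero_iff {m : ℕ} (g : AryTree m) : g.internalCount = 0 ↔ g = leaf := by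
  cases g <;> simp [internalCount]

lemma skel_attachZeroLeaf (t : AryTree D) : t.attachZeroLeaf.skel = t := by
  induction t with
  | leaf => rfl
  | node f ih => simp only [attachZeroLeaf, skel, Fin.cases_succ, ih]

lemma internalCount_attachZeroLeaf (t : AryTree D) :
    t.attachZeroLeaf.internalCount = t.internalCount := by
  induction t with
  | leaf => rfl
  | node f ih =>
    simp only [attachZeroLeaf, internalCount, Fin.sum_univ_succ, Fin.cases_zero, Fin.cases_succ,
      ih, zero_add]

lemma internalCount_skel_le (g : AryTree (D + 1)) : g.skel.internalCount ≤ g.internalCount := by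
  induction g with
  | leaf => exact le_rfl
  | node f ih =>
    simp only [skel, internalCount, Fin.sum_univ_succ]
    have : ∑ i : Fin D, (f i.succ).skel.internalCount ≤
        ∑ i : Fin D, (f i.succ).internalCount :=
      Finset.sum_le_sum fun i _ => ih i.succ
    omega

lemma eq_attachZeroLeaf_skel_of_internalCount_eq {g : AryTree (D + 1)}
    (h : g.internalCount = g.skel.internalCount) : g = g.skel.attachZeroLeaf := by
  induction g with
  | leaf => rfl
  | node f ih =>
    simp only [skel, internalCount, Fin.sum_univ_succ] at h
    have hle : ∀ i ∈ (Finset.univ : Finset (Fin D)),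
        (f i.succ).skel.internalCount ≤ (f i.succ).internalCount :=
      fun i _ => internalCount_skel_le _
    have hsum_le := Finset.sum_le_sum hle
    have hsum_eq :
        ∑ i : Fin D, (f i.succ).skel.internalCount = ∑ i : Fin D, (f i.succ).internalCount := by
      omega
    have hzero : f 0 = leaf := (internalCount_eq_zero_iff _).1 (by omega)
    have hsucc (i : Fin D) : (f i.succ).internalCount = (f i.succ).skel.internalCount :=
      ((Finset.sum_eq_sum_iff_of_le hle).1 hsum_eq i (Finset.mem_univ i)).symm
    simp only [skel, attachZeroLeaf, node.injEq]
    funext i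
    cases i using Fin.cases with
    | zero => simpa using hzero
    | succ j => simpa using ih j.succ (hsucc j)

end AryTree

/-- Let `B` be a melonic `D`-colored graph, encoded by its `D`-ary tree `t` with
`k` vertices.  Then there is a unique melonic `(D+1)`-colored graph `G` with the
same number of vertices reducing to `B` upon deletion of all edges of color `0`
(i.e. whose tree `g` satisfies `g.skel = t` and has the same number of vertices);
moreover its tree is obtained from `t` by attaching one leaf of color `0` to
every vertex. -/
theorem unique_melonic_covering (D : ℕ) (t : AryTree D) :
    (∃! g : AryTree (D + 1),
        g.skel = t ∧ g.internalCount = t.internalCount) ∧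
    (t.attachZeroLeaf.skel = t ∧
      t.attachZeroLeaf.internalCount = t.internalCount) := by
  refine ⟨⟨t.attachZeroLeaf, ⟨t.skel_attachZeroLeaf, t.internalCount_attachZeroLeaf⟩, ?_⟩,
    t.skel_attachZeroLeaf, t.internalCount_attachZeroLeaf⟩
  rintro g ⟨rfl, hg⟩
  exact AryTree.eq_attachZeroLeaf_skel_of_internalCount_eq hg
end

section
/- In a planar connected closed 3-colored graph (colors 0,1,2) whose color-{1,2} subgraph is a single cycle through all 2k vertices, no two distinct edges of color 0 can share both their face of colors 0,1 and their face of colors 0,2. -/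
/-- The number of cycles of a permutation of `Fin k`, counting fixed points
as (trivial) cycles. -/
def cycleCount {k : ℕ} (π : Equiv.Perm (Fin k)) : ℕ :=
  (k - π.support.card) + π.cycleType.card

/-!
The functions `α → ℚ` invariant under a permutation `π` are those constant on its cycles, so
they form a space of dimension `c(π)`, the number of cycles. A function invariant under `π` and
`τ` is invariant under `π * τ`, and comparing dimensions inside the `k`-dimensional space
`α → ℚ` gives `c(π) + c(τ) ≤ k + c(π * τ)`.
Applied to `ρ * π` and `π⁻¹`, with `ρ = finRotate k` a single `k`-cycle, this is the genus bound
`c(π) + c(ρ * π) ≤ k + 1`.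

If `w ≠ w'` lie on one cycle of `π`, then every `π`-invariant function is invariant under
`π * swap w w'`, and the two permutations have opposite signs, so `π * swap w w'` has strictly
more cycles than `π`. When `w, w'` share a cycle of `m` and a cycle of `ρ * m`, the permutation
`m * swap w w'` therefore exceeds the genus bound by two when `m` attains it.
-/

open Function Module Finset

namespace Equiv.Perm

section Invariants

variable {α : Type*} {π τ : Perm α} {f : α → ℚ} {w w' : α}

def invariants (π : Perm α) : Submodule ℚ (α → ℚ) :=
  LinearMap.eqLocus (LinearMap.funLeft ℚ ℚ π) LinearMap.id

theorem mem_invariants : f ∈ invariants π ↔ ∀ x, f (π x) = f x := by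
  simp [invariants, LinearMap.mem_eqLocus, funext_iff, LinearMap.funLeft_apply]

theorem mem_invariants_iff_sameCycle :
    f ∈ invariants π ↔ ∀ x y, π.SameCycle x y → f x = f y := by
  refine ⟨fun hf => ?_, fun hf =>
    mem_invariants.2 fun x => hf _ _ (sameCycle_apply_left.2 (.refl _ _))⟩
  rw [mem_invariants] at hf
  have hzpow : ∀ (i : ℤ) x, f ((π ^ i) x) = f x := by
    intro i
    induction i using Int.induction_on with
    | zero => simp
    | succ i ih => intro x; rw [zpow_add_one, mul_apply, ih, hf]
    | pred i ih => intro x; rw [zpow_sub_one, mul_apply, ih]; simpa using (hf (π⁻¹ x)).symm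
  rintro x _ ⟨i, rfl⟩
  exact (hzpow i x).symm

theorem invariants_inv : invariants π⁻¹ = invariants π := by
  ext f
  simp only [mem_invariants_iff_sameCycle, sameCycle_inv]

theorem invariants_inf_le_mul : invariants π ⊓ invariants τ ≤ invariants (π * τ) := by
  rintro f ⟨hπ, hτ⟩
  rw [SetLike.mem_coe, mem_invariants] at hπ hτ
  exact mem_invariants.2 fun x => by rw [mul_apply, hπ, hτ]

variable [DecidableEq α]

theorem invariants_le_mul_swap (h : π.SameCycle w w') :
    invariants π ≤ invariants (π * swap w w') := by
  intro f hf
  have hww' : f w = f w' := mem_invariants_iff_sameCycle.1 hf _ _ h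
  rw [mem_invariants] at hf ⊢
  intro x
  rw [mul_apply, hf, swap_apply_def]
  split_ifs with hw hw'
  · rw [hw, hww']
  · rw [hw', hww']
  · rfl

end Invariants

section CycleLabel

variable {α : Type*} [Fintype α] [DecidableEq α] {π : Perm α} {x y : α}

def cycleLabel (π : Perm α) (x : α) : fixedPoints π ⊕ π.cycleFactorsFinset :=
  if hx : π x = x then .inl ⟨x, hx⟩
  else .inr ⟨π.cycleOf x, cycleOf_mem_cycleFactorsFinset_iff.2 (mem_support.2 hx)⟩

theorem cycleLabel_eq_iff : cycleLabel π x = cycleLabel π y ↔ π.SameCycle x y := by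
  constructor
  · intro h
    by_cases hx : π x = x <;> by_cases hy : π y = y <;>
      simp only [cycleLabel, hx, hy, ↓reduceDIte, Sum.inl.injEq, Sum.inr.injEq, Subtype.mk.injEq,
        reduceCtorEq] at h
    · obtain rfl : x = y := congrArg Subtype.val h
      rfl
    · have hy' : y ∈ (π.cycleOf x).support :=
        h ▸ mem_support_cycleOf_iff.2 ⟨.refl _ _, mem_support.2 hy⟩
      exact (mem_support_cycleOf_iff.1 hy').1
  · intro h
    by_cases hx : π x = x
    · rw [h.eq_of_left hx]
    · have hy : π y ≠ y := (h.apply_eq_self_iff.not).1 hx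
      simp [cycleLabel, hx, hy, h.cycleOf_eq]

theorem cycleLabel_surjective (π : Perm α) : Surjective (cycleLabel π) := by
  rintro (⟨x, hx⟩ | ⟨c, hc⟩)
  · exact ⟨x, by simp [cycleLabel, show π x = x from hx]⟩
  · obtain ⟨x, hx⟩ := (mem_cycleFactorsFinset_iff.1 hc).1.nonempty_support
    have hπx : π x ≠ x := mem_support.1 (mem_cycleFactorsFinset_support_le hc hx)
    exact ⟨x, by simp [cycleLabel, hπx, cycle_is_cycleOf hx hc]⟩

theorem card_cycleLabel :
    Fintype.card (fixedPoints π ⊕ π.cycleFactorsFinset) =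
      Fintype.card α - #π.support + Multiset.card π.cycleType := by
  rw [Fintype.card_sum, card_fixedPoints, sum_cycleType, Fintype.card_coe, cycleType_def,
    Multiset.card_map]
  rfl

theorem invariants_eq_range_funLeft_cycleLabel :
    invariants π = LinearMap.range (LinearMap.funLeft ℚ ℚ (cycleLabel π)) := by
  ext f
  rw [mem_invariants_iff_sameCycle, LinearMap.mem_range]
  constructor
  · intro hf
    exact ⟨f ∘ surjInv (cycleLabel_surjective π),
      funext fun x => hf _ _ (cycleLabel_eq_iff.1 (surjInv_eq _ _))⟩
  · rintro ⟨g, rfl⟩ x y h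
    simp [LinearMap.funLeft_apply, cycleLabel_eq_iff.2 h]

theorem finrank_invariants (π : Perm α) :
    finrank ℚ (invariants π) = Fintype.card α - #π.support + Multiset.card π.cycleType := by
  rw [invariants_eq_range_funLeft_cycleLabel,
    LinearMap.finrank_range_of_inj (LinearMap.funLeft_injective_of_surjective _ _ _
      (cycleLabel_surjective π)),
    Module.finrank_fintype_fun_eq_card, card_cycleLabel]

end CycleLabel

end Equiv.Perm

section CycleCount

open Equiv Perm

variable {k : ℕ}

theorem cycleCount_eq_finrank_invariants (π : Perm (Fin k)) :
    cycleCount π = finrank ℚ (invariants π) := by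
  rw [finrank_invariants, Fintype.card_fin]
  rfl

theorem cycleCount_inv (π : Perm (Fin k)) : cycleCount π⁻¹ = cycleCount π := by
  rw [cycleCount_eq_finrank_invariants, cycleCount_eq_finrank_invariants, invariants_inv]

theorem cycleCount_add_cycleCount_le_add_cycleCount_mul (π τ : Perm (Fin k)) :
    cycleCount π + cycleCount τ ≤ k + cycleCount (π * τ) := by
  simp only [cycleCount_eq_finrank_invariants]
  calc finrank ℚ (invariants π) + finrank ℚ (invariants τ)
      = finrank ℚ ↥(invariants π ⊔ invariants τ) + finrank ℚ ↥(invariants π ⊓ invariants τ) :=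
        (Submodule.finrank_sup_add_finrank_inf_eq _ _).symm
    _ ≤ k + finrank ℚ (invariants (π * τ)) := by
        gcongr
        · simpa using Submodule.finrank_le (invariants π ⊔ invariants τ)
        · exact Submodule.finrank_mono invariants_inf_le_mul

theorem sign_eq_neg_one_pow_cycleCount (π : Perm (Fin k)) :
    sign π = (-1) ^ (k + cycleCount π) := by
  have hsupp : #π.support ≤ k := by simpa using card_le_univ π.support
  have hexp : k + cycleCount π =
      (#π.support + Multiset.card π.cycleType) + 2 * (k - #π.support) := by
    unfold cycleCount
    omega
  rw [hexp, pow_add, pow_mul, neg_one_sq, one_pow, mul_one, sign_of_cycleType, sum_cycleType]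

theorem cycleCount_lt_mul_swap {π : Perm (Fin k)} {w w' : Fin k} (hne : w ≠ w')
    (h : π.SameCycle w w') : cycleCount π < cycleCount (π * swap w w') := by
  have hle : cycleCount π ≤ cycleCount (π * swap w w') := by
    simp only [cycleCount_eq_finrank_invariants]
    exact Submodule.finrank_mono (invariants_le_mul_swap h)
  have hsign : sign (π * swap w w') = -sign π := by rw [Perm.sign_mul, sign_swap hne, mul_neg_one]
  refine hle.lt_of_ne fun heq => units_ne_neg_self (sign π) ?_
  rw [← hsign, sign_eq_neg_one_pow_cycleCount, sign_eq_neg_one_pow_cycleCount, heq]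

theorem cycleCount_finRotate (n : ℕ) : cycleCount (finRotate (n + 1)) = 1 := by
  cases n with
  | zero => rw [Subsingleton.elim (finRotate 1) 1]; simp [cycleCount]
  | succ n => simp [cycleCount, support_finRotate, cycleType_finRotate]

theorem cycleCount_add_cycleCount_finRotate_mul_le {n : ℕ} (π : Perm (Fin (n + 1))) :
    cycleCount π + cycleCount (finRotate (n + 1) * π) ≤ n + 2 := by
  have := cycleCount_add_cycleCount_le_add_cycleCount_mul (finRotate (n + 1) * π) π⁻¹
  rw [cycleCount_inv, mul_inv_cancel_right, cycleCount_finRotate] at this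
  omega

end CycleCount

/-- A closed 3-colored graph (colors 0,1,2) whose color-{1,2} subgraph is a single
cycle through all `2k` vertices (`k = n+1`) is encoded by the permutation
`m : Fin k ≃ Fin k` matching, along the cycle `w₁ b₁ w₂ b₂ ⋯`, the white vertex
`w` to the black vertex `b_{m w}` by an edge of color 0.  Its faces of colors
0,1 are the cycles of `m` and its faces of colors 0,2 are the cycles of
`finRotate k · m`; planarity (genus 0) is `c(m) + c(finRotate k · m) = k + 1`.
In a planar such graph, no two distinct edges of color 0 (labeled by their white
endpoints `w ≠ w'`) can share both their face of colors 0,1 and their face of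
colors 0,2. -/
theorem planar_no_shared_faces (n : ℕ) (m : Equiv.Perm (Fin (n + 1)))
    (hplanar : cycleCount m + cycleCount (finRotate (n + 1) * m) = (n + 1) + 1) :
    ∀ w w' : Fin (n + 1), w ≠ w' →
      ¬(m.SameCycle w w' ∧ (finRotate (n + 1) * m).SameCycle w w') := by
  rintro w w' hne ⟨hm, hρm⟩
  have hsplit₁ := cycleCount_lt_mul_swap hne hm
  have hsplit₂ := cycleCount_lt_mul_swap hne hρm
  have hgenus := cycleCount_add_cycleCount_finRotate_mul_le (m * Equiv.swap w w')
  rw [← mul_assoc] at hgenus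
  omega
end

section
/- Let G^min be a minimal covering graph of a closed D-colored graph B, i.e., a (D+1)-colored graph obtained from B by adding a perfect matching of color-0 edges so as to maximize the number Σᵢ F^{0i} of faces containing color 0. Then any two distinct edges of color 0 of G^min share at most ⌊D/2⌋ of the faces of colors 0i (i = 1,…,D); in particular at most (D−1)/2 when D is odd and at most D/2 when D is even. -/
/-!
Swapping the color-0 edges at `w` and `w'` replaces each `f i = σ.trans (m i).symm` by
`f i * swap w w'`. When `w` and `w'` lie on one `0i`-face this splits that face, so the number of
cycles rises; otherwise it drops by at most one, since only the two cycles through `w` and `w'` can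
merge. Maximality of `σ` then leaves at least as many unshared colors as shared ones.
Cycles are counted by their least elements, and the split case strictly gains because
`sign (f i) = (-1) ^ (k + cycleCount (f i))` changes under a transposition.
-/

open scoped Classical

open Finset

namespace Equiv.Perm

section SameCycle

variable {α : Type*} {f : Perm α} {x y : α}

theorem SameCycle.rel_of_forall_rel_apply [Finite α] {r : α → α → Prop}
    (hrefl : ∀ z, r z z) (htrans : ∀ {x y z}, r x y → r y z → r x z)
    (hstep : ∀ z, r z (f z)) (h : f.SameCycle x y) : r x y := by
  obtain ⟨n, rfl⟩ := h.exists_nat_pow_eq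
  clear h
  induction n with
  | zero => exact hrefl x
  | succ n ih => rw [pow_succ', mul_apply]; exact htrans ih (hstep _)

variable [DecidableEq α] {a b : α}

theorem SameCycle.of_mul_swap_or [Finite α] (h : (f * swap a b).SameCycle x y) :
    f.SameCycle x y ∨
      ((f.SameCycle x a ∨ f.SameCycle x b) ∧ (f.SameCycle y a ∨ f.SameCycle y b)) := by
  refine h.rel_of_forall_rel_apply (r := fun x y => f.SameCycle x y ∨
    ((f.SameCycle x a ∨ f.SameCycle x b) ∧ (f.SameCycle y a ∨ f.SameCycle y b)))
    (fun _ => .inl .rfl) ?_ fun z => ?_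
  · rintro x y z (hxy | ⟨hx, hy⟩) (hyz | ⟨hy', hz⟩)
    · exact .inl (hxy.trans hyz)
    · exact .inr ⟨hy'.imp hxy.trans hxy.trans, hz⟩
    · exact .inr ⟨hx, hy.imp hyz.symm.trans hyz.symm.trans⟩
    · exact .inr ⟨hx, hz⟩
  · rw [mul_apply, swap_apply_def]
    split_ifs with ha hb
    · exact .inr ⟨.inl (ha ▸ .rfl), .inr (sameCycle_apply_left.2 .rfl)⟩
    · exact .inr ⟨.inr (hb ▸ .rfl), .inl (sameCycle_apply_left.2 .rfl)⟩
    · exact .inl (sameCycle_apply_right.2 .rfl)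

theorem SameCycle.of_mul_swap [Finite α] (h : (f * swap a b).SameCycle x y)
    (hab : f.SameCycle a b) : f.SameCycle x y := by
  rcases h.of_mul_swap_or with h | ⟨hx, hy⟩
  · exact h
  · have hb : ∀ {z}, f.SameCycle z a ∨ f.SameCycle z b → f.SameCycle z b :=
      (·.elim (·.trans hab) id)
    exact (hb hx).trans (hb hy).symm

end SameCycle

section CycleMins

variable {α : Type*} [Fintype α] [LinearOrder α]

def cycleMins (f : Perm α) : Finset α :=
  {x | ∀ y, f.SameCycle x y → x ≤ y}

@[simp]
theorem mem_cycleMins {f : Perm α} {x : α} :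
    x ∈ cycleMins f ↔ ∀ y, f.SameCycle x y → x ≤ y := by
  simp [cycleMins]

theorem card_cycleMins (f : Perm α) :
    #(cycleMins f) = Fintype.card α - #f.support + Multiset.card f.cycleType := by
  have hfixed : {x ∈ cycleMins f | x ∉ f.support} = f.supportᶜ := by
    ext x
    simp only [mem_filter, mem_compl, mem_cycleMins, and_iff_right_iff_imp]
    intro hx y hxy
    exact (hxy.eq_of_left (notMem_support.1 hx)).le
  have hmoved : #{x ∈ cycleMins f | x ∈ f.support} = #f.cycleFactorsFinset := by
    refine card_nbij f.cycleOf
      (fun x hx => cycleOf_mem_cycleFactorsFinset_iff.2 (mem_filter.1 hx).2)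
      (fun x hx x' hx' hxx' => ?_) fun c hc => ?_
    · simp only [coe_filter, Set.mem_ofPred_eq, mem_cycleMins] at hx hx'
      have h := (sameCycle_iff_cycleOf_eq_of_mem_support hx.2 hx'.2).2 hxx'
      exact le_antisymm (hx.1 _ h) (hx'.1 _ h.symm)
    · have hcyc := (mem_cycleFactorsFinset_iff.1 hc).1
      set x := c.support.min' hcyc.nonempty_support
      have hxc : x ∈ c.support := min'_mem _ _
      have hcx := cycle_is_cycleOf hxc hc
      have hxf : x ∈ f.support := mem_cycleFactorsFinset_support_le hc hxc
      refine ⟨x, ?_, hcx.symm⟩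
      simp only [coe_filter, Set.mem_ofPred_eq, mem_cycleMins]
      refine ⟨fun y hxy => min'_le _ _ ?_, hxf⟩
      rw [hcx, mem_support_cycleOf_iff]
      exact ⟨hxy, hxf⟩
  rw [← card_filter_add_card_filter_not (p := (· ∈ f.support)), hfixed, hmoved, card_compl,
    cycleType_def, Multiset.card_map, add_comm]
  rfl

theorem cycleMins_subset_cycleMins {f g : Perm α}
    (h : ∀ {x y}, g.SameCycle x y → f.SameCycle x y) : cycleMins f ⊆ cycleMins g := by
  intro x hx
  rw [mem_cycleMins] at hx ⊢
  exact fun y hxy => hx y (h hxy)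

theorem card_cycleMins_le_card_cycleMins_mul_swap_add_one (f : Perm α) (a b : α) :
    #(cycleMins f) ≤ #(cycleMins (f * swap a b)) + 1 := by
  set T := fun z => f.SameCycle z a ∨ f.SameCycle z b
  -- `T` covers at most two cycles of `f`
  have pigeonhole : ∀ {u v w}, T u → T v → T w →
      ¬ f.SameCycle u v → ¬ f.SameCycle u w → f.SameCycle v w := by
    intro u v w hu hv hw huv huw
    rcases hu with hu | hu <;> rcases hv with hv | hv <;> rcases hw with hw | hw <;>
      first
      | exact (huv (hu.trans hv.symm)).elim
      | exact (huw (hu.trans hw.symm)).elim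
      | exact hv.trans hw.symm
  have undercut : ∀ {x y}, x ∈ cycleMins f → (f * swap a b).SameCycle x y → y < x →
      ¬ f.SameCycle x y ∧ T x ∧ T y := by
    intro x y hx hxy hyx
    have hxy' : ¬ f.SameCycle x y := fun h => (mem_cycleMins.1 hx y h).not_gt hyx
    exact ⟨hxy', hxy.of_mul_swap_or.resolve_left hxy'⟩
  have hlost : #(cycleMins f \ cycleMins (f * swap a b)) ≤ 1 := by
    refine card_le_one.2 fun x hx x' hx' => ?_
    simp only [mem_sdiff, mem_cycleMins (f := f * swap a b), not_forall, not_le] at hx hx'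
    obtain ⟨hx, y, hxy, hyx⟩ := hx
    obtain ⟨hx', y', hxy', hyx'⟩ := hx'
    obtain ⟨hny, hTx, hTy⟩ := undercut hx hxy hyx
    obtain ⟨hny', hTx', hTy'⟩ := undercut hx' hxy' hyx'
    by_contra hne
    have hxx' : ¬ f.SameCycle x x' := fun h =>
      hne (le_antisymm (mem_cycleMins.1 hx _ h) (mem_cycleMins.1 hx' _ h.symm))
    have hx'y := mem_cycleMins.1 hx' _ (pigeonhole hTx hTx' hTy hxx' hny)
    have hxy'' := mem_cycleMins.1 hx _ (pigeonhole hTx' hTx hTy' (hxx' ·.symm) hny')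
    exact lt_irrefl x ((hxy''.trans_lt hyx').trans_le hx'y |>.trans hyx)
  have := card_le_card_sdiff_add_card (s := cycleMins f) (t := cycleMins (f * swap a b))
  omega

end CycleMins

section CycleCount

variable {k : ℕ} {f : Perm (Fin k)} {a b : Fin k}

theorem cycleCount_eq_card_cycleMins (f : Perm (Fin k)) : cycleCount f = #(cycleMins f) := by
  rw [card_cycleMins, Fintype.card_fin]
  rfl

theorem sign_eq_neg_one_pow_add_cycleCount (f : Perm (Fin k)) :
    sign f = (-1) ^ (k + cycleCount f) := by
  have hk : #f.support ≤ k := by simpa using f.support.card_le_univ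
  have hexp :
      k + cycleCount f = #f.support + Multiset.card f.cycleType + 2 * (k - #f.support) := by
    unfold cycleCount
    omega
  rw [sign_of_cycleType, sum_cycleType, hexp, pow_add _ _ (2 * _), pow_mul, neg_one_sq, one_pow,
    mul_one]

theorem cycleCount_mul_swap_ne (hab : a ≠ b) : cycleCount (f * swap a b) ≠ cycleCount f := by
  intro h
  have hsign : sign (f * swap a b) = sign f := by
    rw [sign_eq_neg_one_pow_add_cycleCount, sign_eq_neg_one_pow_add_cycleCount, h]
  rw [sign_mul, sign_swap hab, mul_neg_one] at hsign
  exact neg_units_ne_self _ hsign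

theorem cycleCount_lt_cycleCount_mul_swap (hab : a ≠ b) (h : f.SameCycle a b) :
    cycleCount f < cycleCount (f * swap a b) := by
  refine lt_of_le_of_ne ?_ (cycleCount_mul_swap_ne hab).symm
  rw [cycleCount_eq_card_cycleMins, cycleCount_eq_card_cycleMins]
  exact card_le_card (cycleMins_subset_cycleMins (·.of_mul_swap h))

theorem cycleCount_le_cycleCount_mul_swap_add_one (f : Perm (Fin k)) (a b : Fin k) :
    cycleCount f ≤ cycleCount (f * swap a b) + 1 := by
  rw [cycleCount_eq_card_cycleMins, cycleCount_eq_card_cycleMins]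
  exact card_cycleMins_le_card_cycleMins_mul_swap_add_one f a b

end CycleCount

end Equiv.Perm

open Equiv Equiv.Perm

/-- `B` is encoded by permutations `m i` of `Fin k` (the color-`i` edge at the white vertex `w`
ends at the black vertex `m i w`), a covering by the permutation `σ` giving its color-0 edges,
and a color-0 edge by its white end; the `0i`-faces are then the cycles of
`σ.trans (m i).symm`. -/
theorem minimal_covering_shared_faces (D k : ℕ)
    (m : Fin D → Equiv.Perm (Fin k)) (σ : Equiv.Perm (Fin k))
    (hmin : ∀ σ' : Equiv.Perm (Fin k),
      ∑ i : Fin D, cycleCount (σ'.trans (m i).symm) ≤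
        ∑ i : Fin D, cycleCount (σ.trans (m i).symm)) :
    ∀ w w' : Fin k, w ≠ w' →
      2 * (Finset.univ.filter (fun i : Fin D =>
        Equiv.Perm.SameCycle (σ.trans (m i).symm) w w')).card ≤ D := by
  intro w w' hww'
  set f : Fin D → Perm (Fin k) := fun i => σ.trans (m i).symm
  have hswap : ∀ i, cycleCount (f i) + (if (f i).SameCycle w w' then 1 else 0) ≤
      cycleCount (f i * swap w w') + (if ¬ (f i).SameCycle w w' then 1 else 0) := by
    intro i
    split_ifs with h
    · exact cycleCount_lt_cycleCount_mul_swap hww' h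
    · exact cycleCount_le_cycleCount_mul_swap_add_one (f i) w w'
  have hsum := sum_le_sum fun i (_ : i ∈ univ) => hswap i
  simp only [sum_add_distrib, sum_boole, Nat.cast_id] at hsum
  have hle := hmin ((swap w w').trans σ)
  have hsplit := card_filter_add_card_filter_not (s := univ) (fun i => (f i).SameCycle w w')
  simp only [card_univ, Fintype.card_fin] at hsplit
  change ∑ i, cycleCount (f i * swap w w') ≤ ∑ i, cycleCount (f i) at hle
  change 2 * #{i | (f i).SameCycle w w'} ≤ D
  omega
end
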